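/- arXiv:math/9912110 — 3 statements merged into one kernel-verified Lean document; each statement's English description precedes it below -/
import Mathlib

section
/- Let Γ and G be abelian groups, ρ: Γ → G a homomorphism, k an algebraically closed field, H = Hom(G, k^×), and H̃ = Hom(Γ, k^×). Let S̃ ≤ Γ and S ≤ G be subgroups with ρ(S̃) = S and ρ^{-1}(S) ∩ Γ_w = S̃ for a subgroup Γ_w ≤ Γ containing S̃ with ρ restricting to a map Γ_w → G_w onto a subgroup G_w containing S. Suppose the induced map Γ_w/S̃ → G_w/S is an isomorphism. Then S̃^⊥ = ρ*(S^⊥) · Γ_w^⊥, where ρ*: H → H̃ is composition with ρ, S^⊥ = {h ∈ H : S ⊆ ker h}, S̃^⊥ = {h' ∈ H̃ : S̃ ⊆ ker h'}, and Γ_w^⊥ = {h' ∈ H̃ : Γ_w ⊆ ker h'}. -/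
open scoped Classical

noncomputable instance kRootNat {k : Type*} [Field k] [IsAlgClosed k] : RootableBy kˣ ℕ :=
  rootableByOfPowLeftSurj _ _ (fun {n} hn x => by
    obtain ⟨z, hz⟩ := IsAlgClosed.exists_pow_nat_eq (k := k) (x : k) (Nat.pos_of_ne_zero hn)
    have hz0 : z ≠ 0 := by
      intro h; rw [h, zero_pow hn] at hz; exact x.ne_zero hz.symm
    exact ⟨Units.mk0 z hz0, Units.ext (by simp [hz])⟩)

noncomputable instance kRootInt {k : Type*} [Field k] [IsAlgClosed k] : RootableBy kˣ ℤ :=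
  Group.rootableByIntOfRootableByNat _

noncomputable instance kDiv {k : Type*} [Field k] [IsAlgClosed k] :
    DivisibleBy (Additive kˣ) ℤ where
  div a n := Additive.ofMul (RootableBy.root a.toMul n)
  div_zero a := by simp [RootableBy.root_zero]
  div_cancel {n} a hn := by
    change n • Additive.ofMul _ = a
    rw [← ofMul_zpow, RootableBy.root_cancel _ hn]; rfl

theorem extend_char {k : Type*} [Field k] [IsAlgClosed k] {G : Type*} [CommGroup G]
    (Gw : Subgroup G) (f : Gw →* kˣ) : ∃ F : G →* kˣ, ∀ x : Gw, F x = f x := by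
  obtain ⟨F', hF'⟩ := (Module.Baer.of_divisible (Additive kˣ)).extension_property_addMonoidHom
    (MonoidHom.toAdditive Gw.subtype) (fun a b h => by
      exact Subtype.ext (congrArg Additive.toMul h))
    (MonoidHom.toAdditive f)
  refine ⟨MonoidHom.toAdditive.symm F', fun x => ?_⟩
  exact congrArg Additive.toMul (DFunLike.congr_fun hF' (Additive.ofMul x))

/-- Let `ρ : Γ → G` be a homomorphism of abelian groups, `k` algebraically
closed, and `S̃ ≤ Γ_w ≤ Γ`, `S ≤ G_w ≤ G` subgroups with `ρ(S̃) = S`,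
`ρ⁻¹(S) ∩ Γ_w = S̃`, `ρ(Γ_w) = G_w`, so that the induced map
`Γ_w/S̃ → G_w/S` is an isomorphism. Then `S̃^⊥ = ρ*(S^⊥) · Γ_w^⊥` inside
`H̃ = Hom(Γ, k^×)`: a character `h'` of `Γ` kills `S̃` iff it factors as
`(h ∘ ρ) · h₀` with `h` a character of `G` killing `S` and `h₀` a character
of `Γ` killing `Γ_w`. -/
theorem stmt9 {k : Type*} [Field k] [IsAlgClosed k]
    {Γ G : Type*} [CommGroup Γ] [CommGroup G] (ρ : Γ →* G)
    (Stil : Subgroup Γ) (Γw : Subgroup Γ) (S : Subgroup G) (Gw : Subgroup G)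
    (hSΓw : Stil ≤ Γw) (hSGw : S ≤ Gw)
    (hmapS : Stil.map ρ = S)
    (hcomap : S.comap ρ ⊓ Γw = Stil)
    (hmapΓw : Γw.map ρ = Gw) :
    ∀ h' : Γ →* kˣ, (∀ s ∈ Stil, h' s = 1) ↔
      ∃ h : G →* kˣ, (∀ s ∈ S, h s = 1) ∧
        ∃ h₀ : Γ →* kˣ, (∀ γ ∈ Γw, h₀ γ = 1) ∧ h' = (h.comp ρ) * h₀ := by
  intro h'
  constructor
  · intro hkill
    -- key congruence
    have key : ∀ γ δ : Γ, γ ∈ Γw → δ ∈ Γw → ρ γ = ρ δ → h' γ = h' δ := by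
      intro γ δ hγ hδ hρ
      have hmem : γ * δ⁻¹ ∈ Stil := by
        rw [← hcomap, Subgroup.mem_inf]
        refine ⟨?_, mul_mem hγ (inv_mem hδ)⟩
        simp only [Subgroup.mem_comap, map_mul, map_inv, hρ, mul_inv_cancel]
        exact one_mem S
      have := hkill _ hmem
      rw [map_mul, map_inv] at this
      rw [← mul_inv_eq_one]
      exact this
    -- section of ρ on Gw
    have hsec : ∀ g : Gw, ∃ γ : Γ, γ ∈ Γw ∧ ρ γ = (g : G) := by
      intro g
      have hg : (g : G) ∈ Γw.map ρ := hmapΓw ▸ g.2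
      obtain ⟨γ, hγ, hργ⟩ := hg
      exact ⟨γ, hγ, hργ⟩
    choose sec hsecw hsecρ using hsec
    let f : Gw →* kˣ :=
      { toFun := fun g => h' (sec g)
        map_one' := by
          show h' (sec 1) = 1
          rw [key _ 1 (hsecw 1) (one_mem Γw) (by rw [hsecρ]; simp), map_one]
        map_mul' := by
          intro a b
          show h' (sec (a * b)) = h' (sec a) * h' (sec b)
          rw [key _ (sec a * sec b) (hsecw _) (mul_mem (hsecw a) (hsecw b))
            (by rw [hsecρ, map_mul, hsecρ, hsecρ]; rfl), map_mul] }
    obtain ⟨F, hF⟩ := extend_char Gw f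
    have hFρ : ∀ γ ∈ Γw, F (ρ γ) = h' γ := by
      intro γ hγ
      have hmem : ρ γ ∈ Gw := hmapΓw ▸ ⟨γ, hγ, rfl⟩
      have := hF ⟨ρ γ, hmem⟩
      rw [this]
      exact key _ _ (hsecw ⟨ρ γ, hmem⟩) hγ (hsecρ _)
    refine ⟨F, ?_, h' * (F.comp ρ)⁻¹, ?_, ?_⟩
    · intro s hs
      obtain ⟨σ, hσ, rfl⟩ := hmapS ▸ hs
      rw [hFρ σ (hSΓw hσ)]
      exact hkill σ hσ
    · intro γ hγ
      simp only [MonoidHom.mul_apply, MonoidHom.inv_apply, MonoidHom.coe_comp,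
        Function.comp_apply, hFρ γ hγ, mul_inv_cancel]
    · ext γ
      simp
  · rintro ⟨h, hkS, h₀, hkΓw, rfl⟩
    intro s hs
    have h1 : ρ s ∈ S := hmapS ▸ ⟨s, hs, rfl⟩
    simp [hkS _ h1, hkΓw s (hSΓw hs)]
end

section
/- Let R be a G-graded k-algebra, c a 2-cocycle on G with c(0,0)=1, and R' the twist of R by c. If R is a domain and G is totally ordered (e.g., G = ℤⁿ with lexicographic order) with R graded by G, then R' is a domain. -/
open GradedRing DirectSum SetLike Finset in
theorem aux13 {ι σ A : Type*} [Ring A] [AddCommMonoid ι] [LinearOrder ι] [IsOrderedCancelAddMonoid ι]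
    [SetLike σ A] [AddSubmonoidClass σ A] (𝒜 : ι → σ) [GradedRing 𝒜]
    (h : ∀ (i j : ι) (a b : A), a ∈ 𝒜 i → b ∈ 𝒜 j → a ≠ 0 → b ≠ 0 → a * b ≠ 0) :
    NoZeroDivisors A := by
  constructor
  intro x y hxy
  by_contra rid
  push_neg at rid
  obtain ⟨rid₁, rid₂⟩ := rid
  classical
  have nonempty : ∀ z : A, z ≠ 0 → (decompose 𝒜 z).support.Nonempty := by
    intro z hz
    rw [Finset.nonempty_iff_ne_empty]
    intro hzero
    rw [DFinsupp.support_eq_empty] at hzero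
    exact hz ((DirectSum.decompose 𝒜).injective (by simp [hzero]))
  set set₁ := (decompose 𝒜 x).support with set₁_eq
  set set₂ := (decompose 𝒜 y).support with set₂_eq
  set max₁ := set₁.max' (nonempty x rid₁) with max₁_eq
  set max₂ := set₂.max' (nonempty y rid₂) with max₂_eq
  have mem_max₁ : max₁ ∈ set₁ := max'_mem set₁ (nonempty x rid₁)
  have mem_max₂ : max₂ ∈ set₂ := max'_mem set₂ (nonempty y rid₂)
  have hxy' : proj 𝒜 (max₁ + max₂) (x * y) = 0 := by rw [hxy]; simp
  set antidiag :=
    {z ∈ (decompose 𝒜 x).support ×ˢ (decompose 𝒜 y).support | z.1 + z.2 = max₁ + max₂}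
      with ha
  have mem_antidiag : (max₁, max₂) ∈ antidiag := by
    simp only [antidiag, mem_filter, mem_product]
    exact ⟨⟨mem_max₁, mem_max₂⟩, trivial⟩
  have eq_add_sum :=
    calc
      proj 𝒜 (max₁ + max₂) (x * y) = ∑ ij ∈ antidiag, proj 𝒜 ij.1 x * proj 𝒜 ij.2 y := by
        simp_rw [ha, proj_apply, DirectSum.decompose_mul, DirectSum.coe_mul_apply 𝒜]
      _ = proj 𝒜 max₁ x * proj 𝒜 max₂ y +
            ∑ ij ∈ antidiag.erase (max₁, max₂), proj 𝒜 ij.1 x * proj 𝒜 ij.2 y :=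
        (add_sum_erase _ _ mem_antidiag).symm
  have sum_zero : ∑ ij ∈ antidiag.erase (max₁, max₂), proj 𝒜 ij.1 x * proj 𝒜 ij.2 y = 0 := by
    refine Finset.sum_eq_zero fun z H => ?_
    rcases z with ⟨i, j⟩
    simp only [antidiag, mem_erase, Prod.mk.injEq, Ne, mem_filter, mem_product] at H
    rcases H with ⟨H₁, ⟨H₂, H₃⟩, H₄⟩
    have max_lt : max₁ < i ∨ max₂ < j := by
      rcases lt_trichotomy max₁ i with (h' | rfl | h')
      · exact Or.inl h'
      · exact False.elim (H₁ ⟨rfl, add_left_cancel H₄⟩)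
      · refine Or.inr ?_
        have : i + j < max₁ + j := add_lt_add_of_lt_of_le h' le_rfl
        rw [H₄] at this
        exact lt_of_add_lt_add_left this
    cases' max_lt with max_lt max_lt
    · have not_mem : i ∉ set₁ := fun hmem =>
        lt_irrefl _ (lt_of_lt_of_le max_lt (le_max' set₁ i hmem))
      exact absurd H₂ not_mem
    · have not_mem : j ∉ set₂ := fun hmem =>
        lt_irrefl _ (lt_of_lt_of_le max_lt (le_max' set₂ j hmem))
      exact absurd H₃ not_mem
  have key : proj 𝒜 max₁ x * proj 𝒜 max₂ y = 0 := by
    have := eq_add_sum.symm.trans hxy'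
    rw [sum_zero, add_zero] at this
    exact this
  refine h max₁ max₂ _ _ (SetLike.coe_mem _) (SetLike.coe_mem _) ?_ ?_ key
  · simp only [GradedRing.proj_apply, Ne, ZeroMemClass.coe_eq_zero]
    exact DFinsupp.mem_support_iff.mp mem_max₁
  · simp only [GradedRing.proj_apply, Ne, ZeroMemClass.coe_eq_zero]
    exact DFinsupp.mem_support_iff.mp mem_max₂

/-- Let `R` be a `G`-graded `k`-algebra which is a domain, with `G` a totally
ordered abelian group, and let `A = R'` be the twist of `R` by a 2-cocycle
`c` with `c(0,0) = 1` (so `A` is `G`-graded and the untwisting graded linear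
isomorphism `Φ : A ≃ R` satisfies `Φ(a b) = c(α,β) Φ(a) Φ(b)` on homogeneous
elements). Then `A` is a domain. -/
theorem stmt13 {k : Type*} [Field k] {G : Type*} [AddCommGroup G] [LinearOrder G] [IsOrderedAddMonoid G]
    {A R : Type*} [Ring A] [Algebra k A] [Ring R] [Algebra k R] [IsDomain R]
    (𝒜 : G → Submodule k A) (ℬ : G → Submodule k R)
    [GradedAlgebra 𝒜] [GradedAlgebra ℬ]
    (c : G → G → kˣ)
    (hcocycle : ∀ α β γ : G, c α β * c (α + β) γ = c β γ * c α (β + γ))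
    (hc00 : c 0 0 = 1)
    (Φ : A ≃ₗ[k] R)
    (hΦgr : ∀ (α : G) (a : A), a ∈ 𝒜 α → Φ a ∈ ℬ α)
    (hΦgr' : ∀ (α : G) (r : R), r ∈ ℬ α → Φ.symm r ∈ 𝒜 α)
    (hΦmul : ∀ (α β : G) (a b : A), a ∈ 𝒜 α → b ∈ 𝒜 β →
      Φ (a * b) = (c α β : k) • (Φ a * Φ b)) :
    IsDomain A := by
  have hnt : Nontrivial A := Φ.toEquiv.nontrivial
  have hnzd : NoZeroDivisors A := by
    refine aux13 𝒜 fun i j a b ha hb ha0 hb0 hab0 => ?_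
    have : Φ (a * b) = (c i j : k) • (Φ a * Φ b) := hΦmul i j a b ha hb
    rw [hab0, map_zero] at this
    have hΦa : Φ a ≠ 0 := fun h => ha0 (by simpa using congrArg Φ.symm h)
    have hΦb : Φ b ≠ 0 := fun h => hb0 (by simpa using congrArg Φ.symm h)
    have hc : (c i j : k) ≠ 0 := Units.ne_zero _
    exact (smul_ne_zero hc (mul_ne_zero hΦa hΦb)) this.symm
  exact { hnt, hnzd with }
end

section
/- Let R be a commutative affine algebra over an algebraically closed field k (i.e., a finitely generated commutative k-algebra) and let P be a prime ideal of R of the form P ∈ spec_w, meaning P contains exactly the generators {r_i : i ∈ w} from a fixed finite generating set r_1,…,r_n. Then P is an intersection of maximal ideals M with M ∈ max_w, i.e., maximal ideals containing exactly the generators indexed by w. -/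
/-- Let `R` be a commutative affine algebra over an algebraically closed
field `k`, generated by `r_1, …, r_n`. If `P ∈ spec_w R`, i.e. `P` is a
prime ideal containing exactly the generators `{r_i : i ∈ w}`, then `P` is
the intersection of the maximal ideals in `max_w R` containing it, i.e. the
maximal ideals `M ⊇ P` with `r_i ∈ M ⟺ i ∈ w`. -/
theorem stmt16 {k : Type*} [Field k] [IsAlgClosed k]
    {R : Type*} [CommRing R] [Algebra k R] {n : ℕ} (r : Fin n → R)
    (hgen : Algebra.adjoin k (Set.range r) = ⊤)
    (w : Set (Fin n)) (P : Ideal R) (hP : P.IsPrime)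
    (hPw : ∀ i, r i ∈ P ↔ i ∈ w) :
    P = sInf {M : Ideal R | M.IsMaximal ∧ P ≤ M ∧ ∀ i, r i ∈ M ↔ i ∈ w} := by
  classical
  have hft : Algebra.FiniteType k R := by
    refine ⟨⟨(Set.finite_range r).toFinset, ?_⟩⟩
    rwa [Set.Finite.coe_toFinset]
  have hjac : IsJacobsonRing R := by
    have : IsJacobsonRing k := inferInstance
    exact isJacobsonRing_of_finiteType (A := k) (B := R)
  refine le_antisymm (le_sInf fun M hM => hM.2.1) fun x hx => ?_
  by_contra hxP
  -- consider y = x * ∏_{i ∉ w} r i, which is not in P since P is prime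
  set y : R := x * ∏ i ∈ Finset.univ.filter (fun i => i ∉ w), r i with hy
  have hyP : y ∉ P := by
    intro hyP
    haveI := hP
    rcases (hP.mem_or_mem hyP) with h | h
    · exact hxP h
    · obtain ⟨i, hi, hri⟩ := Ideal.IsPrime.prod_mem_iff.mp h
      exact (Finset.mem_filter.mp hi).2 ((hPw i).mp hri)
  have hPj : P.jacobson = P := isJacobsonRing_iff_prime_eq.mp hjac P hP
  rw [← hPj, Ideal.jacobson, Ideal.mem_sInf] at hyP
  push_neg at hyP
  obtain ⟨M, ⟨hPM, hMmax⟩, hyM⟩ := hyP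
  have hxM : x ∉ M := fun h => hyM (Ideal.mul_mem_right _ _ h)
  have hMw : ∀ i, r i ∈ M ↔ i ∈ w := by
    intro i
    constructor
    · intro hriM
      by_contra hiw
      have hmem : i ∈ Finset.univ.filter (fun j => j ∉ w) :=
        Finset.mem_filter.mpr ⟨Finset.mem_univ i, hiw⟩
      obtain ⟨c, hc⟩ := Finset.dvd_prod_of_mem r hmem
      exact hyM (Ideal.mul_mem_left _ _ (hc ▸ Ideal.mul_mem_right _ _ hriM))
    · intro hiw
      exact hPM ((hPw i).mpr hiw)
  exact hxM (Ideal.mem_sInf.mp hx ⟨hMmax, hPM, hMw⟩)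
end
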